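/- arXiv:1506.08888 — 3 statements merged into one kernel-verified Lean document; each statement's English description precedes it below -/
import Mathlib

section
/- For any metric space (X,d), the metric d_0 is lower semicontinuous with respect to d: if p_n → p and q_n → q in (X,d), then liminf_{n→∞} d_0(p_n,q_n) ≥ d_0(p,q). -/
/-! Prepending a step `p, p'` and appending a step `q', q` of size at most `ε` to an `ε`-chain gives
`d_ε(p, q) ≤ d(p, p') + d_ε(p', q') + d(q', q)`. As the two added terms tend to `0` when
`(p', q') → (p, q)`, every `d_ε` with `ε > 0` is lower semicontinuous on `X × X`, hence so is their
supremum `d_0`. -/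

open Filter Set
open scoped ENNReal

variable {X : Type*}

/-- The length of the chain `x 0, x 1, …, x n` with respect to the distance `ρ`. -/
noncomputable def chainLengthOf (ρ : X → X → ℝ≥0∞) (x : ℕ → X) (n : ℕ) : ℝ≥0∞ :=
  ∑ k ∈ Finset.range n, ρ (x k) (x (k + 1))

/-- `x 0, …, x n` is an `ε`-chain from `p` to `q` with respect to `ρ`. -/
def IsChainOf (ρ : X → X → ℝ≥0∞) (ε : ℝ≥0∞) (p q : X) (x : ℕ → X) (n : ℕ) : Prop :=
  x 0 = p ∧ x n = q ∧ ∀ k < n, ρ (x k) (x (k + 1)) ≤ ε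

/-- `d_ε`: the infimum of lengths of `ε`-chains joining `p` to `q`. -/
noncomputable def chainDistOf (ρ : X → X → ℝ≥0∞) (ε : ℝ≥0∞) (p q : X) : ℝ≥0∞ :=
  ⨅ (n : ℕ) (x : ℕ → X) (_ : IsChainOf ρ ε p q x n), chainLengthOf ρ x n

/-- `d_0 = sup_{ε > 0} d_ε`. -/
noncomputable def chainMetricOf (ρ : X → X → ℝ≥0∞) (p q : X) : ℝ≥0∞ :=
  ⨆ (ε : ℝ≥0∞) (_ : 0 < ε), chainDistOf ρ ε p q

/-- `d_ε` for a metric space, with `ρ = edist`. -/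
noncomputable def chainDist [PseudoEMetricSpace X] (ε : ℝ≥0∞) (p q : X) : ℝ≥0∞ :=
  chainDistOf (fun a b => edist a b) ε p q

/-- `d_0` for a metric space, with `ρ = edist`. -/
noncomputable def chainMetric [PseudoEMetricSpace X] (p q : X) : ℝ≥0∞ :=
  chainMetricOf (fun a b => edist a b) p q

/-- The length of a path `γ : [0,1] → X` with respect to `ρ`:
the supremum over partitions `0 = t 0 ≤ t 1 ≤ … ≤ t n = 1` of the partition sums. -/
noncomputable def pathLengthOf (ρ : X → X → ℝ≥0∞) (γ : ℝ → X) : ℝ≥0∞ :=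
  ⨆ (n : ℕ) (t : ℕ → ℝ) (_ : t 0 = 0 ∧ t n = 1 ∧ Monotone t),
    ∑ k ∈ Finset.range n, ρ (γ (t k)) (γ (t (k + 1)))

noncomputable def pathLength [PseudoEMetricSpace X] (γ : ℝ → X) : ℝ≥0∞ :=
  pathLengthOf (fun a b => edist a b) γ

/-- Continuity of a path `γ` on `[0,1]` with respect to the distance `ρ`. -/
def ContinuousWrt (ρ : X → X → ℝ≥0∞) (γ : ℝ → X) : Prop :=
  ∀ t ∈ Icc (0 : ℝ) 1,
    Tendsto (fun s => ρ (γ s) (γ t)) (nhdsWithin t (Icc (0 : ℝ) 1)) (nhds 0)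

/-- The induced length metric with respect to `ρ`: the infimum of `ρ`-lengths of
`ρ`-continuous paths joining `p` to `q`. -/
noncomputable def lengthMetricOf (ρ : X → X → ℝ≥0∞) (p q : X) : ℝ≥0∞ :=
  ⨅ (γ : ℝ → X) (_ : ContinuousWrt ρ γ ∧ γ 0 = p ∧ γ 1 = q), pathLengthOf ρ γ

/-- The induced length metric `d̄` of a metric space. -/
noncomputable def lengthMetric [PseudoEMetricSpace X] (p q : X) : ℝ≥0∞ :=
  lengthMetricOf (fun a b => edist a b) p q


section ChainDistOf

variable (ρ : X → X → ℝ≥0∞) {ε : ℝ≥0∞}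

theorem chainDistOf_le_chainLengthOf {p q : X} {x : ℕ → X} {n : ℕ}
    (h : IsChainOf ρ ε p q x n) : chainDistOf ρ ε p q ≤ chainLengthOf ρ x n :=
  iInf₂_le_of_le n x (iInf_le _ h)

theorem chainDistOf_le_add_chainDistOf {p p' q : X} (hp : ρ p p' ≤ ε) :
    chainDistOf ρ ε p q ≤ ρ p p' + chainDistOf ρ ε p' q := by
  simp only [chainDistOf, ENNReal.add_iInf]
  refine le_iInf₂ fun n x => le_iInf fun hx => ?_
  let y : ℕ → X := fun k => Nat.casesOn k p x
  have hy : IsChainOf ρ ε p q y (n + 1) := by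
    refine ⟨rfl, hx.2.1, fun k hk => ?_⟩
    cases k with
    | zero => simpa [y, hx.1] using hp
    | succ k => exact hx.2.2 k (by omega)
  calc chainDistOf ρ ε p q ≤ chainLengthOf ρ y (n + 1) := chainDistOf_le_chainLengthOf ρ hy
    _ = ρ p p' + chainLengthOf ρ x n := by
      rw [chainLengthOf, Finset.sum_range_succ', add_comm]
      simp [y, hx.1, chainLengthOf]

theorem chainDistOf_le_chainDistOf_add {p q q' : X} (hq : ρ q' q ≤ ε) :
    chainDistOf ρ ε p q ≤ chainDistOf ρ ε p q' + ρ q' q := by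
  simp only [chainDistOf, ENNReal.iInf_add]
  refine le_iInf₂ fun n x => le_iInf fun hx => ?_
  let y : ℕ → X := fun k => if k ≤ n then x k else q
  have hy : IsChainOf ρ ε p q y (n + 1) := by
    refine ⟨by simp [y, hx.1], by simp [y], fun k hk => ?_⟩
    rcases Nat.lt_or_ge k n with hkn | hkn
    · simpa [y, hkn.le, Nat.succ_le_of_lt hkn] using hx.2.2 k hkn
    · obtain rfl : k = n := by omega
      simpa [y, hx.2.1] using hq
  calc chainDistOf ρ ε p q ≤ chainLengthOf ρ y (n + 1) := chainDistOf_le_chainLengthOf ρ hy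
    _ = chainLengthOf ρ x n + ρ q' q := by
      rw [chainLengthOf, Finset.sum_range_succ, chainLengthOf]
      congr 1
      · refine Finset.sum_congr rfl fun k hk => ?_
        have hk : k < n := Finset.mem_range.1 hk
        simp [y, hk.le, Nat.succ_le_of_lt hk]
      · simp [y, hx.2.1]

theorem chainDistOf_le_add_chainDistOf_add {p p' q q' : X} (hp : ρ p p' ≤ ε)
    (hq : ρ q' q ≤ ε) :
    chainDistOf ρ ε p q ≤ ρ p p' + chainDistOf ρ ε p' q' + ρ q' q :=
  (chainDistOf_le_add_chainDistOf ρ hp).trans <| by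
    rw [add_assoc]
    gcongr
    exact chainDistOf_le_chainDistOf_add ρ hq

end ChainDistOf

theorem lowerSemicontinuous_chainDist [PseudoEMetricSpace X] {ε : ℝ≥0∞} (hε : 0 < ε) :
    LowerSemicontinuous fun x : X × X => chainDist ε x.1 x.2 := by
  refine lowerSemicontinuous_iff_le_liminf.2 fun x => ?_
  set e : X × X → ℝ≥0∞ := fun y => edist x.1 y.1 + edist y.2 x.2
  have he : Tendsto e (nhds x) (nhds 0) := by
    have hcont : Continuous e := by fun_prop
    simpa [e] using hcont.tendsto x
  have hclose : ∀ᶠ y in nhds x, chainDist ε x.1 x.2 ≤ e y + chainDist ε y.1 y.2 := by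
    filter_upwards [he.eventually (gt_mem_nhds hε)] with y hy
    calc chainDist ε x.1 x.2 ≤ edist x.1 y.1 + chainDist ε y.1 y.2 + edist y.2 x.2 :=
          chainDistOf_le_add_chainDistOf_add _
            (le_self_add.trans hy.le) (le_add_self.trans hy.le)
      _ = e y + chainDist ε y.1 y.2 := by ring
  have hlim := ENNReal.liminf_add_of_left_tendsto_zero he fun y => chainDist ε y.1 y.2
  exact (le_liminf_of_le (by isBoundedDefault) hclose).trans_eq hlim

theorem lowerSemicontinuous_chainMetric [PseudoEMetricSpace X] :
    LowerSemicontinuous fun x : X × X => chainMetric x.1 x.2 := by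
  simpa only [chainMetric, chainMetricOf, chainDist] using
    lowerSemicontinuous_biSup fun ε (hε : 0 < ε) => lowerSemicontinuous_chainDist (X := X) hε

/-- `d_0` is lower semicontinuous with respect to `d`:
if `p_n → p` and `q_n → q` in `(X,d)`, then `liminf d_0(p_n,q_n) ≥ d_0(p,q)`. -/
theorem chainMetric_lowerSemicontinuous {X : Type*} [MetricSpace X] (p q : X)
    (pn qn : ℕ → X) (hp : Tendsto pn atTop (nhds p)) (hq : Tendsto qn atTop (nhds q)) :
    chainMetric p q ≤ liminf (fun n => chainMetric (pn n) (qn n)) atTop :=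
  (lowerSemicontinuous_chainMetric.le_liminf (p, q)).trans
    (hp.prodMk_nhds hq).liminf_le_liminf_comp
end

section
/- Let (X,d) be a metric space, p,q ∈ X with d_0(p,q) < ∞. For each n, let c_n = (x_0^n,...,x_{N_n}^n) be an ε_n-chain from p to q with L(c_n) → d_0(p,q) and ε_n → 0. Suppose there are indices k_n such that x_{k_n}^n d-converges to some x ∈ X. Then d_0(p,q) = d_0(p,x) + d_0(x,q); moreover Σ_{k=1}^{k_n} d(x_{k-1}^n,x_k^n) → d_0(p,x) and Σ_{k=k_n+1}^{N_n} d(x_{k-1}^n,x_k^n) → d_0(x,q) as n → ∞. -/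
open Filter Set
open scoped ENNReal

variable {X : Type*}

/-!
Cutting the `n`-th chain at `x n (k n)` and adding one short step to `x₀` gives `δ`-chains from
`p` to `x₀` and from `x₀` to `q` as soon as `ε n` and `d(x n (k n), x₀)` are below `δ`. Hence
`d_0(p,x₀)` and `d_0(x₀,q)` are at most the liminfs of the two partial sums. These sums add up to
`L(c n) → d_0(p,q)`, so the triangle inequality for `d_0` forces additivity, and since
`d_0(p,q) < ∞`, the two liminf bounds can only hold if the partial sums actually converge.
-/

open scoped Topology

namespace ENNReal

variable {ι : Type*} {l : Filter ι} {a b : ι → ℝ≥0∞}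

theorem le_liminf_add : liminf a l + liminf b l ≤ liminf (a + b) l := by
  simp only [liminf_eq_iSup_iInf]
  exact biSup_add_biSup_le' ⟨univ, univ_mem⟩ ⟨univ, univ_mem⟩ fun s hs t ht =>
    le_iSup₂_of_le (s ∩ t) (inter_mem hs ht) <|
      le_iInf₂ fun n hn => add_le_add (iInf₂_le n hn.1) (iInf₂_le n hn.2)

theorem le_limsup_add [l.NeBot] : limsup a l + liminf b l ≤ limsup (a + b) l := by
  rw [limsup_eq_iInf_iSup (u := a + b), liminf_eq_iSup_iInf, add_biSup' ⟨univ, univ_mem⟩]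
  refine le_iInf₂ fun s hs => iSup₂_le fun t ht => ?_
  calc limsup a l + ⨅ n ∈ t, b n ≤ (⨆ n ∈ s ∩ t, a n) + ⨅ n ∈ t, b n := by
        rw [limsup_eq_iInf_iSup]; gcongr; exact iInf₂_le _ (inter_mem hs ht)
    _ = ⨆ n ∈ s ∩ t, (a n + ⨅ m ∈ t, b m) :=
        biSup_add' (l.nonempty_of_mem (inter_mem hs ht)) _
    _ ≤ ⨆ n ∈ s, (a + b) n :=
        iSup₂_le fun n hn => le_iSup₂_of_le n hn.1 (add_le_add_right (iInf₂_le n hn.2) _)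

theorem tendsto_of_tendsto_add_of_le_liminf [l.NeBot] {α β : ℝ≥0∞}
    (hab : Tendsto (a + b) l (𝓝 (α + β))) (hβ : β ≠ ∞) (ha : α ≤ liminf a l)
    (hb : β ≤ liminf b l) : Tendsto a l (𝓝 α) := by
  refine tendsto_of_le_liminf_of_limsup_le ha ((ENNReal.add_le_add_iff_right hβ).1 ?_)
  calc limsup a l + β ≤ limsup a l + liminf b l := by gcongr
    _ ≤ limsup (a + b) l := le_limsup_add
    _ = α + β := hab.limsup_eq

theorem eq_add_and_tendsto_of_tendsto_add [l.NeBot] {L α β : ℝ≥0∞}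
    (hab : Tendsto (a + b) l (𝓝 L)) (hL : L ≠ ∞) (hle : L ≤ α + β) (ha : α ≤ liminf a l)
    (hb : β ≤ liminf b l) : L = α + β ∧ Tendsto a l (𝓝 α) ∧ Tendsto b l (𝓝 β) := by
  have hL_eq : L = α + β := le_antisymm hle <|
    (add_le_add ha hb).trans (le_liminf_add.trans_eq hab.liminf_eq)
  subst hL_eq
  refine ⟨rfl, tendsto_of_tendsto_add_of_le_liminf hab (add_ne_top.1 hL).2 ha hb,
    tendsto_of_tendsto_add_of_le_liminf (b := a) ?_ (add_ne_top.1 hL).1 hb ha⟩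
  simpa only [add_comm] using hab

end ENNReal

section Chains

variable {ρ : X → X → ℝ≥0∞} {ε δ : ℝ≥0∞} {p q r : X} {x : ℕ → X} {n k : ℕ}

theorem IsChainOf.chainDistOf_le (h : IsChainOf ρ ε p q x n) :
    chainDistOf ρ ε p q ≤ chainLengthOf ρ x n :=
  iInf_le_of_le n <| iInf_le_of_le x <| iInf_le _ h

theorem IsChainOf.mono (h : IsChainOf ρ ε p q x n) (hεδ : ε ≤ δ) : IsChainOf ρ δ p q x n :=
  ⟨h.1, h.2.1, fun i hi => (h.2.2 i hi).trans hεδ⟩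

theorem IsChainOf.take (h : IsChainOf ρ ε p q x n) (hk : k ≤ n) : IsChainOf ρ ε p (x k) x k :=
  ⟨h.1, rfl, fun i hi => h.2.2 i (hi.trans_le hk)⟩

theorem IsChainOf.drop (h : IsChainOf ρ ε p q x n) (hk : k ≤ n) :
    IsChainOf ρ ε (x k) q (fun i => x (k + i)) (n - k) :=
  ⟨rfl, by simp only [Nat.add_sub_cancel' hk, h.2.1], fun i hi => h.2.2 (k + i) (by omega)⟩

theorem chainLengthOf_drop (ρ : X → X → ℝ≥0∞) (x : ℕ → X) (k n : ℕ) :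
    chainLengthOf ρ (fun i => x (k + i)) (n - k) =
      ∑ i ∈ Finset.Ico k n, ρ (x i) (x (i + 1)) := by
  rw [Finset.sum_Ico_eq_sum_range]
  rfl

theorem chainLengthOf_eq_add_sum_Ico (ρ : X → X → ℝ≥0∞) (x : ℕ → X) (hk : k ≤ n) :
    chainLengthOf ρ x n = chainLengthOf ρ x k + ∑ i ∈ Finset.Ico k n, ρ (x i) (x (i + 1)) :=
  (Finset.sum_range_add_sum_Ico _ hk).symm

theorem isChainOf_pair (h : ρ p q ≤ ε) : IsChainOf ρ ε p q (fun i => if i = 0 then p else q) 1 :=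
  ⟨rfl, rfl, fun i hi => by simpa [Nat.lt_one_iff.1 hi] using h⟩

theorem chainDistOf_le_of_le (h : ρ p q ≤ ε) : chainDistOf ρ ε p q ≤ ρ p q := by
  simpa [chainLengthOf] using (isChainOf_pair h).chainDistOf_le

theorem IsChainOf.append {y z : ℕ → X} {m : ℕ} (hy : IsChainOf ρ ε p r y n)
    (hz : IsChainOf ρ ε r q z m) :
    ∃ w : ℕ → X, IsChainOf ρ ε p q w (n + m) ∧
      chainLengthOf ρ w (n + m) = chainLengthOf ρ y n + chainLengthOf ρ z m := by
  set w : ℕ → X := fun i => if i ≤ n then y i else z (i - n)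
  have hw_left : ∀ i ≤ n, w i = y i := fun i hi => if_pos hi
  have hw_right : ∀ j, w (n + j) = z j := by
    intro j
    rcases Nat.eq_zero_or_pos j with rfl | hj
    · simp [w, hy.2.1, hz.1]
    · simp [w, show ¬n + j ≤ n by omega]
  have hw_right_succ : ∀ j, w (n + j + 1) = z (j + 1) := fun j => hw_right (j + 1)
  refine ⟨w, ⟨(hw_left 0 n.zero_le).trans hy.1, (hw_right m).trans hz.2.1, fun i hi => ?_⟩, ?_⟩
  · rcases Nat.lt_or_ge i n with hin | hin
    · rw [hw_left i hin.le, hw_left (i + 1) hin]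
      exact hy.2.2 i hin
    · obtain ⟨j, rfl⟩ := Nat.exists_eq_add_of_le hin
      rw [hw_right j, hw_right_succ j]
      exact hz.2.2 j (by omega)
  · rw [chainLengthOf, Finset.sum_range_add]
    congr 1
    · refine Finset.sum_congr rfl fun i hi => ?_
      rw [Finset.mem_range] at hi
      rw [hw_left i hi.le, hw_left (i + 1) hi]
    · exact Finset.sum_congr rfl fun j _ => by rw [hw_right j, hw_right_succ j]

theorem chainDistOf_triangle (ρ : X → X → ℝ≥0∞) (ε : ℝ≥0∞) (p r q : X) :
    chainDistOf ρ ε p q ≤ chainDistOf ρ ε p r + chainDistOf ρ ε r q :=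
  ENNReal.le_iInf_add_iInf fun _ _ => ENNReal.le_iInf_add_iInf fun _ _ =>
    ENNReal.le_iInf_add_iInf fun hy hz => by
      obtain ⟨w, hw, hlen⟩ := hy.append hz
      exact hlen ▸ hw.chainDistOf_le

theorem chainDistOf_le_chainMetricOf (hε : 0 < ε) (p q : X) :
    chainDistOf ρ ε p q ≤ chainMetricOf ρ p q :=
  le_iSup₂_of_le ε hε le_rfl

theorem chainMetricOf_triangle (ρ : X → X → ℝ≥0∞) (p r q : X) :
    chainMetricOf ρ p q ≤ chainMetricOf ρ p r + chainMetricOf ρ r q :=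
  iSup₂_le fun ε hε => (chainDistOf_triangle ρ ε p r q).trans <|
    add_le_add (chainDistOf_le_chainMetricOf hε p r) (chainDistOf_le_chainMetricOf hε r q)

variable {ι : Type*} {l : Filter ι}

theorem chainMetricOf_le_liminf {f e : ι → ℝ≥0∞} (he : Tendsto e l (𝓝 0))
    (h : ∀ δ > 0, ∀ᶠ i in l, chainDistOf ρ δ p q ≤ f i + e i) :
    chainMetricOf ρ p q ≤ liminf f l :=
  iSup₂_le fun δ hδ =>
    (le_liminf_of_le (by isBoundedDefault) (h δ hδ)).trans_eq (ENNReal.liminf_add_of_right_tendsto_zero he f)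

variable {ε : ι → ℝ≥0∞} {y : ι → X} {x : ι → ℕ → X} {n : ι → ℕ}

theorem chainMetricOf_le_liminf_of_isChainOf_to (hε : Tendsto ε l (𝓝 0))
    (hc : ∀ i, IsChainOf ρ (ε i) p (y i) (x i) (n i)) (hy : Tendsto (fun i => ρ (y i) q) l (𝓝 0)) :
    chainMetricOf ρ p q ≤ liminf (fun i => chainLengthOf ρ (x i) (n i)) l := by
  refine chainMetricOf_le_liminf hy fun δ hδ => ?_
  filter_upwards [ENNReal.tendsto_nhds_zero.1 hε δ hδ, ENNReal.tendsto_nhds_zero.1 hy δ hδ]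
    with i hεi hyi
  exact (chainDistOf_triangle ρ δ p (y i) q).trans <|
    add_le_add ((hc i).mono hεi).chainDistOf_le (chainDistOf_le_of_le hyi)

theorem chainMetricOf_le_liminf_of_isChainOf_from (hε : Tendsto ε l (𝓝 0))
    (hc : ∀ i, IsChainOf ρ (ε i) (y i) q (x i) (n i)) (hy : Tendsto (fun i => ρ p (y i)) l (𝓝 0)) :
    chainMetricOf ρ p q ≤ liminf (fun i => chainLengthOf ρ (x i) (n i)) l := by
  refine chainMetricOf_le_liminf hy fun δ hδ => ?_
  filter_upwards [ENNReal.tendsto_nhds_zero.1 hε δ hδ, ENNReal.tendsto_nhds_zero.1 hy δ hδ]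
    with i hεi hyi
  rw [add_comm]
  exact (chainDistOf_triangle ρ δ p (y i) q).trans <|
    add_le_add (chainDistOf_le_of_le hyi) ((hc i).mono hεi).chainDistOf_le

end Chains

theorem chainMetric_additivity_general {X : Type*} [MetricSpace X] (p q : X)
    (hfin : chainMetric p q ≠ ⊤)
    (ε : ℕ → ℝ≥0∞) (hε : Tendsto ε atTop (nhds 0))
    (N : ℕ → ℕ) (x : ℕ → ℕ → X)
    (hc : ∀ n, IsChainOf (fun a b => edist a b) (ε n) p q (x n) (N n))
    (hL : Tendsto (fun n => chainLengthOf (fun a b => edist a b) (x n) (N n)) atTop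
      (nhds (chainMetric p q)))
    (k : ℕ → ℕ) (hk : ∀ n, 1 ≤ k n ∧ k n ≤ N n) (x₀ : X)
    (hx : Tendsto (fun n => x n (k n)) atTop (nhds x₀)) :
    chainMetric p q = chainMetric p x₀ + chainMetric x₀ q ∧
    Tendsto (fun n => ∑ i ∈ Finset.range (k n), edist (x n i) (x n (i + 1))) atTop
      (nhds (chainMetric p x₀)) ∧
    Tendsto (fun n => ∑ i ∈ Finset.Ico (k n) (N n), edist (x n i) (x n (i + 1))) atTop
      (nhds (chainMetric x₀ q)) := by
  have hcut : Tendsto (fun n => edist (x n (k n)) x₀) atTop (𝓝 0) :=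
    tendsto_iff_edist_tendsto_0.1 hx
  have hprefix : chainMetric p x₀ ≤
      liminf (fun n => ∑ i ∈ Finset.range (k n), edist (x n i) (x n (i + 1))) atTop :=
    chainMetricOf_le_liminf_of_isChainOf_to hε (fun n => (hc n).take (hk n).2) hcut
  have hsuffix : chainMetric x₀ q ≤
      liminf (fun n => ∑ i ∈ Finset.Ico (k n) (N n), edist (x n i) (x n (i + 1))) atTop := by
    simp only [← chainLengthOf_drop]
    exact chainMetricOf_le_liminf_of_isChainOf_from hε (fun n => (hc n).drop (hk n).2)
      (by simpa only [edist_comm] using hcut)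
  have hsum := hL.congr fun n => chainLengthOf_eq_add_sum_Ico _ (x n) (hk n).2
  exact ENNReal.eq_add_and_tendsto_of_tendsto_add hsum hfin
    (chainMetricOf_triangle _ p x₀ q) hprefix hsuffix

/-- additivity of `d_0` along converging chain points. If `c n` are
`ε n`-chains from `p` to `q` with `L(c n) → d_0(p,q)`, `ε n → 0`, and the points
`x n (k n)` (with `k n ∈ {1,…,N n}`) `d`-converge to `x₀`, then
`d_0(p,q) = d_0(p,x₀) + d_0(x₀,q)` and the two partial sums of the chains converge to
`d_0(p,x₀)` and `d_0(x₀,q)` respectively. -/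
theorem chainMetric_additivity {X : Type*} [MetricSpace X] (p q : X)
    (hfin : chainMetric p q ≠ ⊤)
    (ε : ℕ → ℝ≥0∞) (hεpos : ∀ n, 0 < ε n) (hε : Tendsto ε atTop (nhds 0))
    (N : ℕ → ℕ) (x : ℕ → ℕ → X)
    (hc : ∀ n, IsChainOf (fun a b => edist a b) (ε n) p q (x n) (N n))
    (hL : Tendsto (fun n => chainLengthOf (fun a b => edist a b) (x n) (N n)) atTop
      (nhds (chainMetric p q)))
    (k : ℕ → ℕ) (hk : ∀ n, 1 ≤ k n ∧ k n ≤ N n) (x₀ : X)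
    (hx : Tendsto (fun n => x n (k n)) atTop (nhds x₀)) :
    chainMetric p q = chainMetric p x₀ + chainMetric x₀ q ∧
    Tendsto (fun n => ∑ i ∈ Finset.range (k n), edist (x n i) (x n (i + 1))) atTop
      (nhds (chainMetric p x₀)) ∧
    Tendsto (fun n => ∑ i ∈ Finset.Ico (k n) (N n), edist (x n i) (x n (i + 1))) atTop
      (nhds (chainMetric x₀ q)) :=
  chainMetric_additivity_general p q hfin ε hε N x hc hL k hk x₀ hx
end

section
/- If (X,d) is a complete and locally compact metric space, then every d_0-ball B_{d_0}(p;r) is d-precompact. -/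
open Filter Set
open scoped ENNReal

variable {X : Type*}

/-! Let `chainBallFilter p s` be the filter generated by the `d_ε`-balls `{y | d_ε(p, y) < s}`,
`ε > 0`; the `d_0`-ball of radius `s` lies in all of them. A continuity argument in `s` shows that
this filter is totally bounded for every finite `s`. For small `s` this holds because `d ≤ d_ε` and
`X` is locally compact. It passes to a supremum of radii, and beyond any radius `s`, because a
`d_ε`-chain of length `< s + β` can be cut into a part of length `< s` and a part of length
`< β + ε`. For the step beyond `s`, completeness makes the filter for `s` converge to the compact
set `K` of its cluster points; by local compactness `K` has a compact neighbourhood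
`cthickening δ K`, which then contains the small-`ε` balls of radius `s + δ / 4`. -/

open Metric Topology

theorem Filter.TotallyBounded.le_nhdsSet_setOf_clusterPt {α : Type*} [UniformSpace α]
    [CompleteSpace α] {f : Filter α} (hf : f.TotallyBounded) :
    f ≤ 𝓝ˢ {x | ClusterPt x f} := by
  refine le_iff_ultrafilter.2 fun u hu ↦ ?_
  obtain ⟨x, hx⟩ := CompleteSpace.complete (u.cauchy_of_totallyBounded' (hf.mono hu))
  exact hx.trans (nhds_le_nhdsSet ((ClusterPt.of_le_nhds hx).mono hu))

theorem Filter.totallyBounded_of_isCompact_mem {α : Type*} [UniformSpace α] {f : Filter α}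
    {C : Set α} (hC : IsCompact C) (hCf : C ∈ f) : f.TotallyBounded :=
  (totallyBounded_principal_iff.2 hC.totallyBounded).mono (le_principal_iff.2 hCf)

theorem ENNReal.exists_sum_range_lt_sum_Ico_lt {a : ℕ → ℝ≥0∞} {n : ℕ} {ε s β : ℝ≥0∞}
    (ha : ∀ k < n, a k ≤ ε) (hs : 0 < s) (hβ : 0 < β)
    (hsum : ∑ k ∈ Finset.range n, a k < s + β) :
    ∃ k ≤ n, ∑ j ∈ Finset.range k, a j < s ∧ ∑ j ∈ Finset.Ico k n, a j < β + ε := by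
  classical
  -- cut after the last partial sum below `s`
  set L : ℕ → ℝ≥0∞ := fun k => ∑ j ∈ Finset.range k, a j
  set k := Nat.findGreatest (fun k => L k < s) n
  have hkn : k ≤ n := Nat.findGreatest_le n
  have hLk : L k < s :=
    Nat.findGreatest_spec (P := fun k => L k < s) (Nat.zero_le n) (by simpa [L])
  refine ⟨k, hkn, hLk, ?_⟩
  rcases hkn.eq_or_lt with hk | hkn
  · simpa [hk] using add_pos_of_pos_of_nonneg hβ (zero_le (a := ε))
  have hsk : s ≤ L k + ε :=
    calc s ≤ L (k + 1) := not_lt.1 (Nat.findGreatest_is_greatest (Nat.lt_succ_self k) hkn)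
      _ = L k + a k := Finset.sum_range_succ a k
      _ ≤ L k + ε := by gcongr; exact ha k hkn
  refine (ENNReal.add_lt_add_iff_left (ne_top_of_lt hLk)).1 ?_
  calc L k + ∑ j ∈ Finset.Ico k n, a j = L n := by
        simp only [L, Finset.range_eq_Ico]
        exact Finset.sum_Ico_consecutive a (Nat.zero_le k) hkn.le
    _ < s + β := hsum
    _ ≤ L k + ε + β := by gcongr
    _ = L k + (β + ε) := by ring

section ChainBall

variable [PseudoEMetricSpace X] {ε ε' s s' : ℝ≥0∞} {p q : X}

theorem chainDist_le_chainLengthOf {x : ℕ → X} {n : ℕ}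
    (h : IsChainOf (fun a b => edist a b) ε p q x n) :
    chainDist ε p q ≤ chainLengthOf (fun a b => edist a b) x n :=
  iInf₂_le_of_le n x (iInf_le _ h)

theorem edist_le_chainDist : edist p q ≤ chainDist ε p q := by
  refine le_iInf₂ fun n x => le_iInf fun ⟨hx0, hxn, _⟩ => ?_
  rw [← hx0, ← hxn, chainLengthOf, Finset.range_eq_Ico]
  exact edist_le_Ico_sum_edist x (Nat.zero_le n)

theorem chainDist_anti (p q : X) : Antitone fun ε : ℝ≥0∞ => chainDist ε p q :=
  fun _ _ hε => le_iInf₂ fun _ _ => le_iInf fun ⟨hx0, hxn, hx⟩ =>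
    chainDist_le_chainLengthOf ⟨hx0, hxn, fun k hk => (hx k hk).trans hε⟩

theorem chainDist_le_chainMetric (hε : 0 < ε) (p q : X) : chainDist ε p q ≤ chainMetric p q := by
  rw [chainMetric, chainMetricOf]
  exact le_iSup₂ (f := fun ε (_ : 0 < ε) => chainDistOf (fun a b => edist a b) ε p q) ε hε

def chainBall (p : X) (ε s : ℝ≥0∞) : Set X := {y | chainDist ε p y < s}

theorem chainBall_subset_chainBall (hε : ε ≤ ε') (hs : s ≤ s') :
    chainBall p ε s ⊆ chainBall p ε' s' :=
  fun _ hy => ((chainDist_anti _ _ hε).trans_lt hy).trans_le hs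

theorem chainBall_subset_eball : chainBall p ε s ⊆ eball p s :=
  fun _ hy => mem_eball'.2 (edist_le_chainDist.trans_lt hy)

theorem exists_mem_chainBall_edist_lt {β : ℝ≥0∞} {y : X} (hs : 0 < s) (hβ : 0 < β)
    (hy : y ∈ chainBall p ε (s + β)) : ∃ x ∈ chainBall p ε s, edist x y < β + ε := by
  obtain ⟨n, x, ⟨hx0, hxn, hx⟩, hlen⟩ :
      ∃ n x, IsChainOf (fun a b => edist a b) ε p y x n ∧
        chainLengthOf (fun a b => edist a b) x n < s + β := by
    simpa only [chainBall, chainDist, chainDistOf, iInf_lt_iff, exists_prop, mem_ofPred_eq] using hy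
  obtain ⟨k, hkn, hk, hkn'⟩ := ENNReal.exists_sum_range_lt_sum_Ico_lt hx hs hβ hlen
  have hxk : chainDist ε p (x k) ≤ chainLengthOf (fun a b => edist a b) x k :=
    chainDist_le_chainLengthOf ⟨hx0, rfl, fun j hj => hx j (hj.trans_le hkn)⟩
  refine ⟨x k, hxk.trans_lt hk, ?_⟩
  rw [← hxn]
  exact (edist_le_Ico_sum_edist x hkn).trans_lt hkn'

def chainBallFilter (p : X) (s : ℝ≥0∞) : Filter X := ⨅ ε > 0, 𝓟 (chainBall p ε s)

theorem hasBasis_chainBallFilter (p : X) (s : ℝ≥0∞) :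
    (chainBallFilter p s).HasBasis (0 < ·) (chainBall p · s) :=
  hasBasis_biInf_principal'
    (fun ε hε ε' hε' => ⟨min ε ε', lt_min hε hε',
      chainBall_subset_chainBall (min_le_left _ _) le_rfl,
      chainBall_subset_chainBall (min_le_right _ _) le_rfl⟩)
    ⟨1, one_pos⟩

theorem chainBallFilter_mono (p : X) : Monotone (chainBallFilter p) :=
  fun _ _ hs => iInf₂_mono fun _ _ => principal_mono.2 (chainBall_subset_chainBall le_rfl hs)

theorem exists_pos_totallyBounded_chainBallFilter [LocallyCompactSpace X] (p : X) :
    ∃ s > 0, (chainBallFilter p s).TotallyBounded := by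
  obtain ⟨C, hC, hCp⟩ := exists_compact_mem_nhds p
  obtain ⟨s, hs, hsC⟩ := nhds_basis_eball.mem_iff.1 hCp
  exact ⟨s, hs, totallyBounded_of_isCompact_mem hC (mem_of_superset
    ((hasBasis_chainBallFilter p s).mem_of_mem one_pos) (chainBall_subset_eball.trans hsC))⟩

theorem totallyBounded_chainBallFilter_of_forall_lt (hs0 : 0 < s) (hs : s ≠ ⊤)
    (h : ∀ t < s, (chainBallFilter p t).TotallyBounded) :
    (chainBallFilter p s).TotallyBounded := by
  refine uniformity_basis_edist.filter_totallyBounded_iff.2 fun η hη => ?_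
  set β := η / 3
  have hβ : 0 < β := ENNReal.div_pos hη.ne' ENNReal.ofNat_ne_top
  obtain ⟨t, hst, hts⟩ := exists_between (ENNReal.sub_lt_self hs hs0.ne' hβ.ne')
  obtain ⟨N, hN, hNt⟩ := uniformity_basis_edist.filter_totallyBounded_iff.1 (h t hts) β hβ
  obtain ⟨ε, hε, hεN⟩ := (hasBasis_chainBallFilter p t).mem_iff.1 hNt
  refine ⟨N, hN, (hasBasis_chainBallFilter p s).mem_iff.2
    ⟨min ε β, lt_min hε hβ, fun y hy => ?_⟩⟩
  obtain ⟨x, hx, hxy⟩ := exists_mem_chainBall_edist_lt (zero_le.trans_lt hst) hβ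
    (chainBall_subset_chainBall le_rfl (le_tsub_add.trans (add_le_add hst.le le_rfl)) hy)
  obtain ⟨z, hz, hxz⟩ := hεN (chainBall_subset_chainBall (min_le_left _ _) le_rfl hx)
  refine ⟨z, hz, ?_⟩
  calc edist y z ≤ edist x y + edist x z := edist_triangle_left _ _ _
    _ < β + β + β := ENNReal.add_lt_add (hxy.trans_le (by gcongr; exact min_le_right _ _)) hxz
    _ = η := ENNReal.add_thirds η

theorem exists_gt_totallyBounded_chainBallFilter [CompleteSpace X] [LocallyCompactSpace X]
    (hs0 : 0 < s) (hs : s ≠ ⊤) (h : (chainBallFilter p s).TotallyBounded) :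
    ∃ s' > s, (chainBallFilter p s').TotallyBounded := by
  set K := {x | ClusterPt x (chainBallFilter p s)}
  obtain ⟨δ, hδ, hKδ⟩ := h.isCompact_setOfPred_clusterPt.exists_isCompact_cthickening
  obtain ⟨ε, hε, hεK⟩ := (hasBasis_chainBallFilter p s).mem_iff.1
    (h.le_nhdsSet_setOf_clusterPt (thickening_mem_nhdsSet K (half_pos hδ)))
  set β := ENNReal.ofReal (δ / 4)
  have hβ : 0 < β := ENNReal.ofReal_pos.2 (by positivity)
  refine ⟨s + β, ENNReal.lt_add_right hs hβ.ne', totallyBounded_of_isCompact_mem hKδ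
    ((hasBasis_chainBallFilter p _).mem_iff.2 ⟨min ε β, lt_min hε hβ, fun y hy => ?_⟩)⟩
  obtain ⟨x, hx, hxy⟩ := exists_mem_chainBall_edist_lt hs0 hβ hy
  have hy' : y ∈ thickening (δ / 2) (thickening (δ / 2) K) := by
    refine (mem_thickening_iff_exists_edist_lt _ _).2
      ⟨x, hεK (chainBall_subset_chainBall (min_le_left _ _) le_rfl hx), ?_⟩
    calc edist y x < β + min ε β := edist_comm x y ▸ hxy
      _ ≤ β + β := by gcongr; exact min_le_right _ _
      _ = ENNReal.ofReal (δ / 2) := by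
        rw [← ENNReal.ofReal_add (by positivity) (by positivity)]; ring_nf
  exact thickening_subset_cthickening _ _ (add_halves δ ▸ thickening_thickening_subset _ _ _ hy')

theorem totallyBounded_chainBallFilter [CompleteSpace X] [LocallyCompactSpace X] (p : X)
    {r : ℝ≥0∞} (hr : r ≠ ⊤) : (chainBallFilter p r).TotallyBounded := by
  set g := sSup {s | (chainBallFilter p s).TotallyBounded}
  have below : ∀ t < g, (chainBallFilter p t).TotallyBounded := fun t ht => by
    obtain ⟨s, hs, hts⟩ := lt_sSup_iff.1 ht
    exact hs.mono (chainBallFilter_mono p hts.le)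
  obtain ⟨s₀, hs₀, h₀⟩ := exists_pos_totallyBounded_chainBallFilter p
  have hg0 : 0 < g := hs₀.trans_le (le_sSup h₀)
  suffices g = ⊤ from below r (this ▸ hr.lt_top)
  by_contra hg
  obtain ⟨s, hgs, hs⟩ := exists_gt_totallyBounded_chainBallFilter hg0 hg
    (totallyBounded_chainBallFilter_of_forall_lt hg0 hg below)
  exact (le_sSup hs).not_gt hgs

end ChainBall

/-- if `(X,d)` is complete and locally compact, then every `d_0`-ball of
finite radius is `d`-precompact. -/
theorem chainMetric_ball_precompact {X : Type*} [MetricSpace X] [CompleteSpace X]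
    [LocallyCompactSpace X] (p : X) (r : ℝ≥0∞) (hr : r ≠ ⊤) :
    IsCompact (closure {y : X | chainMetric p y < r}) := by
  have hle : 𝓟 {y : X | chainMetric p y < r} ≤ chainBallFilter p r :=
    le_iInf₂ fun ε hε => principal_mono.2 fun y hy =>
      (chainDist_le_chainMetric hε p y).trans_lt hy
  have htb := totallyBounded_principal_iff.1 ((totallyBounded_chainBallFilter p hr).mono hle)
  exact htb.closure.isCompact_of_isClosed isClosed_closure
end
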